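/- Assume N ≥ 4. Let R := Σ_{1≤s<t≤K} a_{st} be the total number of cross-matched pairs under a uniformly random labeling L. Set G₁ := Σ_{1≤s<t≤K} N_sN_t and G₂ := (1/2)·Σ_{s=1}^K N_s(N−N_s)(N−N_s−1). Then E[R] = G₁/(N−1) and Var(R) = (G₁/(N−1))·(1 − G₁/(N−1)) + (G₁² − G₁ − 2G₂)/((N−1)(N−3)). -/

import Mathlib

open Finset Filter MeasureTheory ProbabilityTheory Topology

namespace Crossmatch

/-- First endpoint (index `2j`, i.e., the paper's `2j-1` in 1-based indexing) of the `j`-th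
matched pair in the fixed perfect matching on `{1, …, 2I}`. -/
def ep1 {I : ℕ} (j : Fin I) : Fin (2 * I) := ⟨2 * j.val, by have := j.isLt; omega⟩

/-- Second endpoint (index `2j+1`, i.e., the paper's `2j`) of the `j`-th matched pair. -/
def ep2 {I : ℕ} (j : Fin I) : Fin (2 * I) := ⟨2 * j.val + 1, by have := j.isLt; omega⟩

/-- The set of labelings `L : {1,…,2I} → {1,…,K}` assigning label `s` to exactly `Nc s`
indices, for every `s`. -/
def labelings (I K : ℕ) (Nc : Fin K → ℕ) : Finset (Fin (2 * I) → Fin K) :=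
  univ.filter fun L => ∀ s : Fin K, (univ.filter fun i => L i = s).card = Nc s

/-- The count `a_{st}(L)`: the number of matched pairs `j` with `{L(2j-1), L(2j)} = {s,t}`.
For `s ≠ t` this is the cross-count; for `s = t` it is the pure count (both endpoints labeled
`s`). -/
def crossCount (I K : ℕ) (L : Fin (2 * I) → Fin K) (s t : Fin K) : ℕ :=
  (univ.filter fun j : Fin I =>
    ({L (ep1 j), L (ep2 j)} : Finset (Fin K)) = ({s, t} : Finset (Fin K))).card

/-- Expectation of a real-valued statistic under a uniformly random labeling. -/
noncomputable def expct (I K : ℕ) (Nc : Fin K → ℕ)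
    (X : (Fin (2 * I) → Fin K) → ℝ) : ℝ :=
  (∑ L ∈ labelings I K Nc, X L) / ((labelings I K Nc).card : ℝ)

open Classical in
/-- Probability of an event under a uniformly random labeling. -/
noncomputable def pr (I K : ℕ) (Nc : Fin K → ℕ)
    (ev : (Fin (2 * I) → Fin K) → Prop) : ℝ :=
  (((labelings I K Nc).filter ev).card : ℝ) / ((labelings I K Nc).card : ℝ)

/-- Variance of a real-valued statistic under a uniformly random labeling. -/
noncomputable def variance (I K : ℕ) (Nc : Fin K → ℕ)
    (X : (Fin (2 * I) → Fin K) → ℝ) : ℝ :=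
  expct I K Nc (fun L => (X L - expct I K Nc X) ^ 2)

/-- Covariance of two real-valued statistics under a uniformly random labeling. -/
noncomputable def covar (I K : ℕ) (Nc : Fin K → ℕ)
    (X Y : (Fin (2 * I) → Fin K) → ℝ) : ℝ :=
  expct I K Nc (fun L => (X L - expct I K Nc X) * (Y L - expct I K Nc Y))

/-- The index set of (unordered) pairs `s < t`, indexing the cross-count vector. -/
abbrev Pairs (K : ℕ) := {q : Fin K × Fin K // q.1 < q.2}

/-- The covariance matrix of the cross-count vector `(a_{st})_{s<t}` under a uniformly
random labeling. -/
noncomputable def covMatrix (I K : ℕ) (Nc : Fin K → ℕ) :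
    Matrix (Pairs K) (Pairs K) ℝ :=
  Matrix.of fun q r =>
    covar I K Nc (fun L => (crossCount I K L q.1.1 q.1.2 : ℝ))
      (fun L => (crossCount I K L r.1.1 r.1.2 : ℝ))

/-!
Write `R L = ∑ⱼ [L (2j-1) ≠ L (2j)]`. The uniform law on labelings is invariant under
permutations of the positions, so `P(L a ≠ L b)` is one constant `p` for all `a ≠ b`, and
`P(L a ≠ L b, L c ≠ L d)` one constant `q` for all distinct `a, b, c, d`. Summing over all
ordered pairs of positions determines `p`: for every labeling the sum is
`∑ₛ Nₛ (N - Nₛ) = 2 G₁`, and the number of terms is the same sum for the labeling with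
pairwise distinct labels. Summing over ordered pairs of disjoint ordered pairs determines `q`
in the same way, the sum being `(2 G₁)² - 4 ∑ₛ Nₛ (N - Nₛ)² + 2 (2 G₁)` by inclusion–exclusion
over how the two pairs meet. Finally `E[R] = I p` and `E[R²] = I p + I (I - 1) q`.
-/

section Discord

variable {ι α : Type*} [DecidableEq α]

def discord (g : ι → α) (a b : ι) : ℝ := if g a = g b then 0 else 1

lemma discord_comm (g : ι → α) (a b : ι) : discord g a b = discord g b a := by
  simp only [discord, eq_comm]

@[simp] lemma discord_self (g : ι → α) (a : ι) : discord g a a = 0 := if_pos rfl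

lemma discord_mul_self (g : ι → α) (a b : ι) :
    discord g a b * discord g a b = discord g a b := by
  unfold discord; split_ifs <;> norm_num

lemma discord_id_of_ne [DecidableEq ι] {a b : ι} (hab : a ≠ b) : discord id a b = 1 := if_neg hab

lemma sum_discord [Fintype ι] (g : ι → α) (a : ι) :
    ∑ b, discord g a b = Fintype.card ι - #{b | g b = g a} := by
  have h : ∀ b, discord g a b = 1 - if g b = g a then 1 else 0 := fun b => by
    simp only [discord, eq_comm (a := g a)]; split_ifs <;> norm_num
  simp only [h, sum_sub_distrib, sum_const, card_univ, nsmul_eq_mul, mul_one, sum_boole]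

variable [Fintype ι] [DecidableEq ι]

lemma sum_discord_id (a : ι) : ∑ b, discord id a b = Fintype.card ι - 1 := by
  simp [sum_discord, filter_eq']

lemma sum_compl_pair {a b : ι} (hab : a ≠ b) (f : ι → ℝ) :
    ∑ c ∈ {a, b}ᶜ, f c = ∑ c, f c - f a - f b := by
  rw [← sum_compl_add_sum {a, b}, sum_pair hab]; ring

lemma sum_sum_compl_pair_discord (g : ι → α) {a b : ι} (hab : a ≠ b) :
    ∑ c ∈ {a, b}ᶜ, ∑ d ∈ {a, b}ᶜ, discord g c d
      = ∑ c, ∑ d, discord g c d - 2 * ∑ d, discord g a d - 2 * ∑ d, discord g b d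
        + 2 * discord g a b := by
  have hcol : ∀ d, ∑ c, discord g c d = ∑ c, discord g d c := fun d =>
    sum_congr rfl fun c _ => discord_comm g c d
  simp only [sum_compl_pair hab, sum_sub_distrib, hcol, discord_self, discord_comm g b a]
  ring

lemma sum_discord_mul_sum_disjoint_discord (g : ι → α) :
    ∑ a, ∑ b, discord g a b * ∑ c ∈ {a, b}ᶜ, ∑ d ∈ {a, b}ᶜ, discord g c d
      = (∑ a, ∑ b, discord g a b) ^ 2 - 4 * ∑ a, (∑ b, discord g a b) ^ 2
        + 2 * ∑ a, ∑ b, discord g a b := by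
  set T := ∑ a, ∑ b, discord g a b
  set r := fun a => ∑ b, discord g a b
  have hpt : ∀ a b, discord g a b * ∑ c ∈ {a, b}ᶜ, ∑ d ∈ {a, b}ᶜ, discord g c d
      = T * discord g a b - 2 * (discord g a b * r a) - 2 * (discord g b a * r b)
        + 2 * discord g a b := by
    intro a b
    rcases eq_or_ne a b with rfl | hab
    · simp
    rw [sum_sum_compl_pair_discord g hab, discord_comm g b a]
    linear_combination (2 : ℝ) * discord_mul_self g a b
  have hrow : ∀ a, ∑ b, discord g a b * r a = r a ^ 2 := fun a => by rw [← sum_mul, sq]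
  simp only [hpt, sum_add_distrib, sum_sub_distrib, ← mul_sum, hrow]
  rw [sum_comm (f := fun a b => discord g b a * r b)]
  simp only [hrow]
  ring

end Discord

section Labelings

variable {I K : ℕ} {Nc : Fin K → ℕ}

lemma comp_perm_mem_labelings (σ : Equiv.Perm (Fin (2 * I))) {L : Fin (2 * I) → Fin K}
    (hL : L ∈ labelings I K Nc) : L ∘ σ ∈ labelings I K Nc := by
  simp only [labelings, mem_filter, mem_univ, true_and] at hL ⊢
  intro s
  rw [← hL s]
  exact card_equiv σ (by simp)

lemma sum_labelings_comp_perm (σ : Equiv.Perm (Fin (2 * I)))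
    (F : (Fin (2 * I) → Fin K) → ℝ) :
    ∑ L ∈ labelings I K Nc, F (L ∘ σ) = ∑ L ∈ labelings I K Nc, F L :=
  sum_nbij' (· ∘ σ) (· ∘ σ.symm) (fun _ hL => comp_perm_mem_labelings σ hL)
    (fun _ hL => comp_perm_mem_labelings σ.symm hL)
    (fun L _ => by ext; simp) (fun L _ => by ext; simp) (fun _ _ => rfl)

lemma sum_labelings_comp_injective {n : ℕ} {x y : Fin n → Fin (2 * I)}
    (hx : Function.Injective x) (hy : Function.Injective y) (F : (Fin n → Fin K) → ℝ) :
    ∑ L ∈ labelings I K Nc, F (L ∘ x) = ∑ L ∈ labelings I K Nc, F (L ∘ y) := by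
  obtain ⟨σ, hσ⟩ := Equiv.Perm.exists_extending_pair x y hx hy
  have hy' : y = σ ∘ x := funext fun i => (hσ i).symm
  rw [hy', ← sum_labelings_comp_perm σ (fun L => F (L ∘ x))]
  rfl

lemma labelings_nonempty (hNsum : ∑ s, Nc s = 2 * I) : (labelings I K Nc).Nonempty := by
  let e : (Σ s : Fin K, Fin (Nc s)) ≃ Fin (2 * I) :=
    Fintype.equivOfCardEq (by simp [Fintype.card_sigma, hNsum])
  refine ⟨fun i => (e.symm i).1, ?_⟩
  simp only [labelings, mem_filter, mem_univ, true_and]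
  intro s
  have hfiber : ({x : (Σ s : Fin K, Fin (Nc s)) | x.1 = s} : Finset _)
      = ({s} : Finset (Fin K)).sigma fun _ => univ := by
    ext ⟨t, x⟩; simp
  rw [card_equiv e.symm (t := {x | x.1 = s}) (by simp), hfiber, card_sigma]
  simp

lemma sum_comp_of_mem_labelings {L : Fin (2 * I) → Fin K} (hL : L ∈ labelings I K Nc)
    (f : Fin K → ℝ) : ∑ a, f (L a) = ∑ s, (Nc s : ℝ) * f s := by
  rw [← sum_fiberwise_of_maps_to' (fun a _ => mem_univ (L a)) f]
  refine sum_congr rfl fun s _ => ?_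
  simp only [labelings, mem_filter, mem_univ, true_and] at hL
  rw [sum_const, hL s, nsmul_eq_mul]

lemma sum_discord_of_mem_labelings {L : Fin (2 * I) → Fin K} (hL : L ∈ labelings I K Nc)
    (a : Fin (2 * I)) : ∑ b, discord L a b = (2 * I : ℝ) - Nc (L a) := by
  simp only [labelings, mem_filter, mem_univ, true_and] at hL
  rw [sum_discord, hL, Fintype.card_fin]
  push_cast; ring

end Labelings

section Moments

variable {I K : ℕ} {Nc : Fin K → ℕ}

noncomputable def discordCount (I : ℕ) (Nc : Fin K → ℕ) : ℝ := ∑ s, (Nc s : ℝ) * (2 * I - Nc s)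

noncomputable def disjointDiscordCount (I : ℕ) (Nc : Fin K → ℕ) : ℝ :=
  discordCount I Nc ^ 2 - 4 * ∑ s, (Nc s : ℝ) * (2 * I - Nc s) ^ 2 + 2 * discordCount I Nc

lemma sum_labelings_discord {a b : Fin (2 * I)} (hab : a ≠ b) (a' b' : Fin (2 * I)) :
    ∑ L ∈ labelings I K Nc, discord L a' b'
      = (∑ L ∈ labelings I K Nc, discord L a b) * discord id a' b' := by
  rcases eq_or_ne a' b' with rfl | hab'
  · simp
  rw [discord_id_of_ne hab', mul_one]
  have hinj : ∀ {x y : Fin (2 * I)}, x ≠ y → Function.Injective ![x, y] := fun h => by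
    intro i j hij; fin_cases i <;> fin_cases j <;> simp_all
  exact sum_labelings_comp_injective (hinj hab') (hinj hab) fun v => discord v 0 1

lemma sum_labelings_discord_mul_discord {a b c d : Fin (2 * I)} (hab : a ≠ b) (hac : a ≠ c)
    (had : a ≠ d) (hbc : b ≠ c) (hbd : b ≠ d) (hcd : c ≠ d) (a' b' : Fin (2 * I))
    {c' d' : Fin (2 * I)} (hc' : c' ∈ ({a', b'}ᶜ : Finset _)) (hd' : d' ∈ ({a', b'}ᶜ : Finset _)) :
    ∑ L ∈ labelings I K Nc, discord L a' b' * discord L c' d'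
      = (∑ L ∈ labelings I K Nc, discord L a b * discord L c d)
        * (discord id a' b' * discord id c' d') := by
  rcases eq_or_ne a' b' with rfl | hab'
  · simp
  rcases eq_or_ne c' d' with rfl | hcd'
  · simp
  rw [discord_id_of_ne hab', discord_id_of_ne hcd', mul_one, mul_one]
  simp only [mem_compl, mem_insert, mem_singleton, not_or] at hc' hd'
  have hinj : ∀ {x y z w : Fin (2 * I)}, x ≠ y → x ≠ z → x ≠ w → y ≠ z → y ≠ w → z ≠ w →
      Function.Injective ![x, y, z, w] := fun _ _ _ _ _ _ => by
    intro i j hij; fin_cases i <;> fin_cases j <;> simp_all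
  exact sum_labelings_comp_injective
    (hinj hab' (Ne.symm hc'.1) (Ne.symm hd'.1) (Ne.symm hc'.2) (Ne.symm hd'.2) hcd')
    (hinj hab hac had hbc hbd hcd) fun v => discord v 0 1 * discord v 2 3

lemma mul_sum_labelings_discord {a b : Fin (2 * I)} (hab : a ≠ b) :
    (2 * I : ℝ) * (2 * I - 1) * ∑ L ∈ labelings I K Nc, discord L a b
      = #(labelings I K Nc) * discordCount I Nc := by
  have hswap : ∑ a', ∑ b', ∑ L ∈ labelings I K Nc, discord L a' b'
      = ∑ L ∈ labelings I K Nc, ∑ a', ∑ b', discord L a' b' :=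
    (sum_congr rfl fun _ _ => sum_comm).trans sum_comm
  have htotal : ∀ L ∈ labelings I K Nc,
      ∑ a', ∑ b', discord L a' b' = discordCount I Nc := fun L hL => by
    simp only [sum_discord_of_mem_labelings hL]
    exact sum_comp_of_mem_labelings hL fun s => 2 * I - Nc s
  rw [sum_congr rfl fun a' _ => sum_congr rfl fun b' _ => sum_labelings_discord hab a' b',
    sum_congr rfl htotal] at hswap
  simp only [← mul_sum, sum_discord_id, sum_const, card_univ, Fintype.card_fin,
    nsmul_eq_mul] at hswap
  push_cast at hswap
  linear_combination hswap

lemma mul_sum_labelings_discord_mul_discord {a b c d : Fin (2 * I)} (hab : a ≠ b)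
    (hac : a ≠ c) (had : a ≠ d) (hbc : b ≠ c) (hbd : b ≠ d) (hcd : c ≠ d) :
    (2 * I : ℝ) * (2 * I - 1) * (2 * I - 2) * (2 * I - 3)
        * ∑ L ∈ labelings I K Nc, discord L a b * discord L c d
      = #(labelings I K Nc) * disjointDiscordCount I Nc := by
  have hswap : ∑ a', ∑ b', ∑ c' ∈ ({a', b'}ᶜ : Finset _), ∑ d' ∈ ({a', b'}ᶜ : Finset _),
        ∑ L ∈ labelings I K Nc, discord L a' b' * discord L c' d'
      = ∑ L ∈ labelings I K Nc, ∑ a', ∑ b', discord L a' b'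
          * ∑ c' ∈ ({a', b'}ᶜ : Finset _), ∑ d' ∈ ({a', b'}ᶜ : Finset _), discord L c' d' := by
    simp only [mul_sum]
    refine ((sum_congr rfl fun a' _ => sum_congr rfl fun b' _ =>
      (sum_congr rfl fun c' _ => sum_comm).trans sum_comm).trans ?_)
    exact (sum_congr rfl fun _ _ => sum_comm).trans sum_comm
  have htotal : ∀ L ∈ labelings I K Nc, ∑ a', ∑ b', discord L a' b'
        * ∑ c' ∈ ({a', b'}ᶜ : Finset _), ∑ d' ∈ ({a', b'}ᶜ : Finset _), discord L c' d'
      = disjointDiscordCount I Nc :=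
    fun L hL => by
      simp only [sum_discord_mul_sum_disjoint_discord, sum_discord_of_mem_labelings hL]
      rw [sum_comp_of_mem_labelings hL fun s => 2 * I - Nc s,
        sum_comp_of_mem_labelings hL fun s => (2 * I - Nc s) ^ 2]
      rfl
  rw [sum_congr rfl fun a' _ => sum_congr rfl fun b' _ => sum_congr rfl fun c' hc' =>
      sum_congr rfl fun d' hd' =>
        sum_labelings_discord_mul_discord hab hac had hbc hbd hcd a' b' hc' hd',
    sum_congr rfl htotal, sum_const, nsmul_eq_mul] at hswap
  simp only [← mul_sum, sum_discord_mul_sum_disjoint_discord, sum_discord_id, sum_const,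
    card_univ, Fintype.card_fin, nsmul_eq_mul] at hswap
  push_cast at hswap
  linear_combination hswap

end Moments

lemma two_mul_sum_filter_lt_mul {ι : Type*} [Fintype ι] [LinearOrder ι] (f : ι → ℝ) :
    2 * ∑ q ∈ univ.filter (fun q : ι × ι => q.1 < q.2), f q.1 * f q.2
      = ∑ s, f s * (∑ t, f t - f s) := by
  have hswap : ∑ q ∈ univ.filter (fun q : ι × ι => q.1 < q.2), f q.1 * f q.2
      = ∑ q ∈ univ.filter (fun q : ι × ι => q.2 < q.1), f q.1 * f q.2 :=
    sum_equiv (Equiv.prodComm ι ι) (by simp) fun q _ => mul_comm _ _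
  have hpt : ∀ s t : ι, ((if s < t then f s * f t else 0) + if t < s then f s * f t else 0)
      = f s * f t - if s = t then f s * f t else 0 := by
    intro s t
    rcases lt_trichotomy s t with h | rfl | h
    · simp [h, h.ne, h.not_gt]
    · simp
    · simp [h, h.ne', h.not_gt]
  rw [two_mul]
  nth_rewrite 2 [hswap]
  simp only [sum_filter]
  rw [← sum_add_distrib, Fintype.sum_prod_type]
  simp only [hpt, sum_sub_distrib, sum_ite_eq, mem_univ, if_true, mul_sub, mul_sum]

lemma sum_filter_lt_ite_pair_eq {K : ℕ} (u v : Fin K) :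
    ∑ q ∈ univ.filter (fun q : Fin K × Fin K => q.1 < q.2),
      (if ({u, v} : Finset (Fin K)) = {q.1, q.2} then (1 : ℝ) else 0)
      = if u = v then 0 else 1 := by
  have key : ∀ q ∈ univ.filter (fun q : Fin K × Fin K => q.1 < q.2),
      (({u, v} : Finset _) = {q.1, q.2} ↔ u ≠ v ∧ (min u v, max u v) = q) := by
    rintro ⟨q₁, q₂⟩ hq
    simp only [mem_filter, mem_univ, true_and] at hq
    rw [← coe_inj]; push_cast
    rw [Set.pair_eq_pair_iff, Prod.ext_iff]
    grind
  rw [sum_congr rfl fun q hq => if_congr (key q hq) rfl rfl]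
  rcases eq_or_ne u v with huv | huv
  · simp [huv]
  · simp [huv, sum_ite_eq, lt_of_le_of_ne min_le_max]

lemma sum_filter_lt_crossCount {I K : ℕ} (L : Fin (2 * I) → Fin K) :
    ∑ q ∈ univ.filter (fun q : Fin K × Fin K => q.1 < q.2), (crossCount I K L q.1 q.2 : ℝ)
      = ∑ j, discord L (ep1 j) (ep2 j) := by
  simp only [crossCount, natCast_card_filter]
  rw [sum_comm]
  exact sum_congr rfl fun j _ => sum_filter_lt_ite_pair_eq _ _

lemma ep1_ne_ep2 {I : ℕ} (j : Fin I) : ep1 j ≠ ep2 j := by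
  simp [ep1, ep2, Fin.ext_iff]

lemma ep_ne_ep_of_ne {I : ℕ} {j j' : Fin I} (h : j ≠ j') :
    ep1 j ≠ ep1 j' ∧ ep1 j ≠ ep2 j' ∧ ep2 j ≠ ep1 j' ∧ ep2 j ≠ ep2 j' := by
  simp only [ep1, ep2, ne_eq, Fin.ext_iff] at h ⊢; omega

section Expectation

variable {I K : ℕ} {Nc : Fin K → ℕ}

lemma expct_sum {ι : Type*} (s : Finset ι) (X : ι → (Fin (2 * I) → Fin K) → ℝ) :
    expct I K Nc (fun L => ∑ j ∈ s, X j L) = ∑ j ∈ s, expct I K Nc (X j) := by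
  simp only [expct]
  rw [sum_comm, sum_div]

lemma variance_eq_expct_sq_sub (hΩ : (labelings I K Nc).Nonempty)
    (X : (Fin (2 * I) → Fin K) → ℝ) :
    variance I K Nc X = expct I K Nc (fun L => X L ^ 2) - expct I K Nc X ^ 2 := by
  have hm : (#(labelings I K Nc) : ℝ) ≠ 0 := by exact_mod_cast hΩ.card_pos.ne'
  set μ := expct I K Nc X with hμ
  have hsum : ∑ L ∈ labelings I K Nc, X L = #(labelings I K Nc) * μ := by
    rw [hμ, expct]; field_simp
  have hexpand : ∑ L ∈ labelings I K Nc, (X L - μ) ^ 2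
      = ∑ L ∈ labelings I K Nc, X L ^ 2 - 2 * μ * ∑ L ∈ labelings I K Nc, X L
        + #(labelings I K Nc) * μ ^ 2 := by
    have hsq : ∀ L, (X L - μ) ^ 2 = X L ^ 2 - 2 * μ * X L + μ ^ 2 := fun L => by ring
    simp only [hsq, sum_add_distrib, sum_sub_distrib, ← mul_sum, sum_const, nsmul_eq_mul]
  rw [variance, ← hμ]
  simp only [expct]
  rw [hexpand, hsum]
  field_simp
  ring

lemma card_labelings_ne_zero (hNsum : ∑ s, Nc s = 2 * I) : (#(labelings I K Nc) : ℝ) ≠ 0 := by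
  exact_mod_cast (labelings_nonempty hNsum).card_pos.ne'

lemma expct_discord (hNsum : ∑ s, Nc s = 2 * I) {a b : Fin (2 * I)} (hab : a ≠ b) :
    expct I K Nc (fun L => discord L a b)
      = discordCount I Nc / ((2 * I : ℝ) * (2 * I - 1)) := by
  have hI : 2 ≤ 2 * I := by omega
  have hIR : (2 : ℝ) ≤ 2 * I := by exact_mod_cast hI
  rw [expct, div_eq_div_iff (card_labelings_ne_zero hNsum) (by nlinarith)]
  linear_combination mul_sum_labelings_discord (Nc := Nc) hab

lemma expct_discord_mul_discord (hNsum : ∑ s, Nc s = 2 * I) {a b c d : Fin (2 * I)}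
    (hab : a ≠ b) (hac : a ≠ c) (had : a ≠ d) (hbc : b ≠ c) (hbd : b ≠ d) (hcd : c ≠ d) :
    expct I K Nc (fun L => discord L a b * discord L c d)
      = disjointDiscordCount I Nc / ((2 * I : ℝ) * (2 * I - 1) * (2 * I - 2) * (2 * I - 3)) := by
  have hI : 4 ≤ 2 * I := by omega
  have hIR : (4 : ℝ) ≤ 2 * I := by exact_mod_cast hI
  have hD : (0 : ℝ) < 2 * I * (2 * I - 1) * (2 * I - 2) * (2 * I - 3) := by
    apply mul_pos (mul_pos (mul_pos _ _) _) _ <;> linarith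
  rw [expct, div_eq_div_iff (card_labelings_ne_zero hNsum) hD.ne']
  linear_combination mul_sum_labelings_discord_mul_discord (Nc := Nc) hab hac had hbc hbd hcd

end Expectation

section Statistic

variable {I K : ℕ} {Nc : Fin K → ℕ}

lemma expct_sum_discord_ep (hNsum : ∑ s, Nc s = 2 * I) :
    expct I K Nc (fun L => ∑ j, discord L (ep1 j) (ep2 j))
      = I * (discordCount I Nc / ((2 * I : ℝ) * (2 * I - 1))) := by
  simp only [expct_sum, expct_discord hNsum (ep1_ne_ep2 _), sum_const, card_univ,
    Fintype.card_fin, nsmul_eq_mul]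

lemma expct_sq_sum_discord_ep (hNsum : ∑ s, Nc s = 2 * I) :
    expct I K Nc (fun L => (∑ j, discord L (ep1 j) (ep2 j)) ^ 2)
      = I * (discordCount I Nc / ((2 * I : ℝ) * (2 * I - 1)))
        + I * (I - 1) * (disjointDiscordCount I Nc / ((2 * I : ℝ) * (2 * I - 1) * (2 * I - 2) * (2 * I - 3))) := by
  set p := discordCount I Nc / ((2 * I : ℝ) * (2 * I - 1))
  set q := disjointDiscordCount I Nc / ((2 * I : ℝ) * (2 * I - 1) * (2 * I - 2) * (2 * I - 3))
  have hpair : ∀ j j' : Fin I,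
      expct I K Nc (fun L => discord L (ep1 j) (ep2 j) * discord L (ep1 j') (ep2 j'))
        = q + if j = j' then p - q else 0 := by
    intro j j'
    rcases eq_or_ne j j' with rfl | h
    · simp only [discord_mul_self, expct_discord hNsum (ep1_ne_ep2 j), if_true]
      ring
    · obtain ⟨h₁, h₂, h₃, h₄⟩ := ep_ne_ep_of_ne h
      rw [expct_discord_mul_discord hNsum (ep1_ne_ep2 j) h₁ h₂ h₃ h₄ (ep1_ne_ep2 j'), if_neg h,
        add_zero]
  simp only [sq, sum_mul_sum, expct_sum, hpair, sum_add_distrib, sum_ite_eq, mem_univ, if_true,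
    sum_const, card_univ, Fintype.card_fin, nsmul_eq_mul]
  ring

end Statistic

theorem stmt9_general (K I : ℕ) (hN : 4 ≤ 2 * I)
    (Nc : Fin K → ℕ) (hNsum : ∑ s, Nc s = 2 * I)
    (R : (Fin (2 * I) → Fin K) → ℝ)
    (hR : ∀ L, R L = ∑ q ∈ univ.filter (fun q : Fin K × Fin K => q.1 < q.2),
        (crossCount I K L q.1 q.2 : ℝ))
    (G₁ G₂ : ℝ)
    (hG₁ : G₁ = ∑ q ∈ univ.filter (fun q : Fin K × Fin K => q.1 < q.2),
        (Nc q.1 : ℝ) * (Nc q.2 : ℝ))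
    (hG₂ : G₂ = (1 / 2) * ∑ s, (Nc s : ℝ) * ((2 * I : ℝ) - (Nc s : ℝ))
        * ((2 * I : ℝ) - (Nc s : ℝ) - 1)) :
    expct I K Nc R = G₁ / ((2 * I : ℝ) - 1)
    ∧ variance I K Nc R
        = (G₁ / ((2 * I : ℝ) - 1)) * (1 - G₁ / ((2 * I : ℝ) - 1))
          + (G₁ ^ 2 - G₁ - 2 * G₂) / (((2 * I : ℝ) - 1) * ((2 * I : ℝ) - 3)) := by
  have hT : discordCount I Nc = 2 * G₁ := by
    have hsum : ∑ s, (Nc s : ℝ) = 2 * I := by exact_mod_cast hNsum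
    rw [discordCount, hG₁, two_mul_sum_filter_lt_mul (fun s => (Nc s : ℝ)), hsum]
  have hM : disjointDiscordCount I Nc = 4 * (G₁ ^ 2 - G₁ - 2 * G₂) := by
    have hQ : ∑ s, (Nc s : ℝ) * (2 * I - Nc s) ^ 2 = 2 * G₂ + 2 * G₁ := by
      rw [← hT, hG₂, discordCount, show ∀ x : ℝ, 2 * (1 / 2 * x) = x from fun x => by ring,
        ← sum_add_distrib]
      exact sum_congr rfl fun s _ => by ring
    rw [disjointDiscordCount, hQ, hT]
    ring
  have hRdiscord : R = fun L => ∑ j, discord L (ep1 j) (ep2 j) :=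
    funext fun L => (hR L).trans (sum_filter_lt_crossCount L)
  subst hRdiscord
  have hIR : (4 : ℝ) ≤ 2 * I := by exact_mod_cast hN
  have h0 : (I : ℝ) ≠ 0 := by linarith
  have h1 : (2 * I : ℝ) - 1 ≠ 0 := by linarith
  have h2 : (I : ℝ) - 1 ≠ 0 := by linarith
  have h3 : (2 * I : ℝ) - 3 ≠ 0 := by linarith
  have hmean : expct I K Nc (fun L => ∑ j, discord L (ep1 j) (ep2 j)) = G₁ / (2 * I - 1) := by
    rw [expct_sum_discord_ep hNsum, hT]
    field_simp
  have hsecond : expct I K Nc (fun L => (∑ j, discord L (ep1 j) (ep2 j)) ^ 2)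
      = G₁ / (2 * I - 1) + (G₁ ^ 2 - G₁ - 2 * G₂) / ((2 * I - 1) * (2 * I - 3)) := by
    rw [expct_sq_sum_discord_ep hNsum, hT, hM, show (2 * I : ℝ) - 2 = 2 * (I - 1) by ring]
    field_simp
    ring
  refine ⟨hmean, ?_⟩
  rw [variance_eq_expct_sq_sub (labelings_nonempty hNsum), hsecond, hmean]
  ring

/-- null mean and variance of the multisample crossmatch statistic
`R = Σ_{s<t} a_{st}`. -/
theorem stmt9 (K I : ℕ) (hK : 2 ≤ K) (hI : 1 ≤ I) (hN : 4 ≤ 2 * I)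
    (Nc : Fin K → ℕ) (hNpos : ∀ s, 0 < Nc s) (hNsum : ∑ s, Nc s = 2 * I)
    (R : (Fin (2 * I) → Fin K) → ℝ)
    (hR : ∀ L, R L = ∑ q ∈ univ.filter (fun q : Fin K × Fin K => q.1 < q.2),
        (crossCount I K L q.1 q.2 : ℝ))
    (G₁ G₂ : ℝ)
    (hG₁ : G₁ = ∑ q ∈ univ.filter (fun q : Fin K × Fin K => q.1 < q.2),
        (Nc q.1 : ℝ) * (Nc q.2 : ℝ))
    (hG₂ : G₂ = (1 / 2) * ∑ s, (Nc s : ℝ) * ((2 * I : ℝ) - (Nc s : ℝ))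
        * ((2 * I : ℝ) - (Nc s : ℝ) - 1)) :
    expct I K Nc R = G₁ / ((2 * I : ℝ) - 1)
    ∧ variance I K Nc R
        = (G₁ / ((2 * I : ℝ) - 1)) * (1 - G₁ / ((2 * I : ℝ) - 1))
          + (G₁ ^ 2 - G₁ - 2 * G₂) / (((2 * I : ℝ) - 1) * ((2 * I : ℝ) - 3)) :=
  stmt9_general K I hN Nc hNsum R hR G₁ G₂ hG₁ hG₂

end Crossmatch
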